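/- arXiv:1512.06847 — 2 statements merged into one kernel-verified Lean document; each statement's English description precedes it below -/
import Mathlib

section
/- Let A be a nonzero complex Banach algebra and let A_e be its unitization with the norm ‖a + λe‖₁ = ‖a‖ + |λ|. Then for every a ∈ A, the numerical range V(A_e, a) = {f(a) : f ∈ D(A_e, e)} equals the closed disk {z ∈ ℂ : |z| ≤ ‖a‖}. -/
open Unitization WithLp

/-- The element `a` of `A`, viewed as the element `a + 0·e` of the unitization
`A_e = WithLp 1 (Unitization ℂ A)` equipped with the norm `‖a + λe‖₁ = ‖a‖ + |λ|`. -/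
noncomputable def inrL1 {A : Type*} [NonUnitalNormedRing A] [NormedSpace ℂ A] (a : A) :
    WithLp 1 (Unitization ℂ A) :=
  (WithLp.equiv 1 (Unitization ℂ A)).symm (Unitization.inr a)

/-- The functional `φ∞ : a + λ·e ↦ λ` on the ℓ¹-unitization, as a continuous linear map. -/
noncomputable def phiInf (A : Type*) [NonUnitalNormedRing A] [NormedSpace ℂ A]
    [IsScalarTower ℂ A A] [SMulCommClass ℂ A A] :
    WithLp 1 (Unitization ℂ A) →L[ℂ] ℂ :=
  LinearMap.mkContinuous
    ((Unitization.fstHom ℂ A).toLinearMap ∘ₗ (WithLp.linearEquiv 1 ℂ (Unitization ℂ A)).toLinearMap)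
    1
    (fun x => by
      rw [one_mul, WithLp.unitization_norm_def]
      simpa using le_add_of_nonneg_right (norm_nonneg _))

/- Every `z` with `‖z‖ ≤ ‖a‖` is `g a` for a contractive functional `g` on `A` (Hahn–Banach), and
`a + λe ↦ λ + g a` is then a normalized state on the ℓ¹-unitization taking the value `z` at `a`.
Conversely `‖f a‖ ≤ ‖f‖ ‖a‖₁ = ‖a‖` for every state `f`. -/

theorem exists_norm_le_one_apply_eq {𝕜 E : Type*} [RCLike 𝕜] [NormedAddCommGroup E]
    [NormedSpace 𝕜 E] {x : E} {z : 𝕜} (hz : ‖z‖ ≤ ‖x‖) :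
    ∃ g : StrongDual 𝕜 E, ‖g‖ ≤ 1 ∧ g x = z := by
  obtain ⟨g, hg, hgx⟩ := exists_dual_vector'' 𝕜 x
  refine ⟨(z / ‖x‖) • g, ?_, ?_⟩
  · calc ‖(z / ‖x‖) • g‖ = ‖z‖ / ‖x‖ * ‖g‖ := by simp [norm_smul]
      _ ≤ 1 * 1 := by gcongr; exact div_le_one_of_le₀ hz (norm_nonneg x)
      _ = 1 := one_mul 1
  · rcases eq_or_ne x 0 with rfl | hx
    · simpa using (norm_le_zero_iff.mp (by simpa using hz)).symm
    · have : (‖x‖ : 𝕜) ≠ 0 := by exact_mod_cast norm_ne_zero_iff.mpr hx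
      simp [hgx, this]

namespace WithLp

variable {𝕜 A : Type*} [NontriviallyNormedField 𝕜] [NonUnitalNormedRing A] [NormedSpace 𝕜 A]
  [IsScalarTower 𝕜 A A] [SMulCommClass 𝕜 A A]

lemma unitization_norm_one : ‖(1 : WithLp 1 (Unitization 𝕜 A))‖ = 1 := by
  rw [unitization_norm_def]
  show ‖(1 : Unitization 𝕜 A).fst‖ + ‖(1 : Unitization 𝕜 A).snd‖ = 1
  simp

noncomputable def unitizationFunctional (g : StrongDual 𝕜 A) :
    StrongDual 𝕜 (WithLp 1 (Unitization 𝕜 A)) :=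
  LinearMap.mkContinuous
    (((Unitization.fstHom 𝕜 A).toLinearMap + g.toLinearMap ∘ₗ Unitization.sndHom 𝕜 𝕜 A) ∘ₗ
      (WithLp.linearEquiv 1 𝕜 (Unitization 𝕜 A)).toLinearMap)
    (max 1 ‖g‖) fun x => by
      rw [unitization_norm_def, mul_add]
      refine (norm_add_le _ _).trans (add_le_add ?_ ?_)
      · exact le_mul_of_one_le_left (norm_nonneg _) (le_max_left _ _)
      · exact (g.le_opNorm _).trans (by gcongr; exacts [le_max_right _ _, le_rfl])

variable (g : StrongDual 𝕜 A)

@[simp]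
lemma unitizationFunctional_apply (x : WithLp 1 (Unitization 𝕜 A)) :
    unitizationFunctional g x = (ofLp x).fst + g (ofLp x).snd := rfl

lemma unitizationFunctional_one : unitizationFunctional g 1 = 1 := by
  show (1 : Unitization 𝕜 A).fst + g (1 : Unitization 𝕜 A).snd = 1
  simp

lemma unitizationFunctional_inr (a : A) :
    unitizationFunctional g (toLp 1 (a : Unitization 𝕜 A)) = g a := by
  simp

lemma norm_unitizationFunctional {g : StrongDual 𝕜 A} (hg : ‖g‖ ≤ 1) :
    ‖unitizationFunctional g‖ = 1 := by
  refine le_antisymm ?_ ?_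
  · refine ContinuousLinearMap.opNorm_le_bound _ zero_le_one fun x => ?_
    rw [unitizationFunctional_apply, one_mul, unitization_norm_def]
    exact (norm_add_le _ _).trans
      (add_le_add_right ((g.le_of_opNorm_le hg _).trans_eq (one_mul _)) _)
  · have := (unitizationFunctional g).le_opNorm 1
    rwa [unitizationFunctional_one, unitization_norm_one, mul_one, norm_one] at this

end WithLp

theorem numericalRange_of_inr_eq_closedBall_general
    {A : Type*} [NonUnitalNormedRing A] [NormedSpace ℂ A]
    [IsScalarTower ℂ A A] [SMulCommClass ℂ A A] (a : A) :
    {z : ℂ | ∃ f : WithLp 1 (Unitization ℂ A) →L[ℂ] ℂ,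
        (f 1 = 1 ∧ ‖f‖ = 1) ∧ f (inrL1 a) = z} =
      {z : ℂ | ‖z‖ ≤ ‖a‖} := by
  ext z
  constructor
  · rintro ⟨f, ⟨-, hf⟩, rfl⟩
    calc ‖f (inrL1 a)‖ ≤ ‖f‖ * ‖inrL1 a‖ := f.le_opNorm _
      _ = ‖a‖ := by rw [hf, one_mul]; exact unitization_norm_inr a
  · intro hz
    obtain ⟨g, hg, rfl⟩ := exists_norm_le_one_apply_eq hz
    exact ⟨unitizationFunctional g, ⟨unitizationFunctional_one g, norm_unitizationFunctional hg⟩,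
      unitizationFunctional_inr g a⟩

/-- If `A` is a nonzero complex Banach algebra and `A_e` its unitization with the norm
`‖a + λe‖₁ = ‖a‖ + |λ|`, then for every `a ∈ A` the numerical range
`V(A_e, a) = {f(a) : f ∈ D(A_e, e)}` (where `D(A_e, e)` is the set of normalized states,
i.e. continuous linear functionals `f` with `f(e) = ‖f‖ = 1`) equals the closed disk
`{z ∈ ℂ : |z| ≤ ‖a‖}`. -/
theorem numericalRange_of_inr_eq_closedBall
    {A : Type*} [NonUnitalNormedRing A] [NormedSpace ℂ A]
    [IsScalarTower ℂ A A] [SMulCommClass ℂ A A] [CompleteSpace A] [Nontrivial A] (a : A) :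
    {z : ℂ | ∃ f : WithLp 1 (Unitization ℂ A) →L[ℂ] ℂ,
        (f 1 = 1 ∧ ‖f‖ = 1) ∧ f (inrL1 a) = z} =
      {z : ℂ | ‖z‖ ≤ ‖a‖} :=
  numericalRange_of_inr_eq_closedBall_general a
end

section
/- Let A be a nonzero commutative radical complex Banach algebra and let A_e be its unitization with the norm ‖a + λe‖₁ = ‖a‖ + |λ|. Then there exists an extreme point f of the set D(A_e, e) of normalized states on A_e such that f is not multiplicative, i.e., there exist x, y ∈ A_e with f(xy) ≠ f(x)f(y). (This disproves the claim that every extreme normalized state on a unital commutative complex Banach algebra is multiplicative.) -/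
/-!
The normalized states form a weak*-compact set, so by Krein–Milman they have an extreme point `f`.
A multiplicative state is a character, so it sends each `a ∈ A` into its quasispectrum `{0}`;
hence the only multiplicative state is `φ∞`. But for the `ℓ¹` norm, `φ∞ ± ψ ∘ snd` are states for
every `ψ ∈ A'` of norm one, and `φ∞` is their midpoint, so `φ∞` is not extreme.
-/

open Unitization WithLp

section NormalizedStates

variable {𝕜 E : Type*} [RCLike 𝕜] [NormedAddCommGroup E] [NormedSpace 𝕜 E]

variable (𝕜) in
def normalizedStates (e : E) : Set (StrongDual 𝕜 E) := {f | f e = 1 ∧ ‖f‖ = 1}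

variable {e : E}

theorem normalizedStates_eq (he : ‖e‖ = 1) :
    normalizedStates 𝕜 e = {f | f e = 1 ∧ ‖f‖ ≤ 1} := by
  ext f
  refine and_congr_right fun hfe => ⟨le_of_eq, fun hle => le_antisymm hle ?_⟩
  simpa [hfe, he] using f.le_opNorm e

theorem extremePoints_normalizedStates_nonempty (he : ‖e‖ = 1) :
    (Set.extremePoints ℝ (normalizedStates 𝕜 e)).Nonempty := by
  let T : Set (WeakDual 𝕜 E) := WeakDual.toStrongDual ⁻¹' normalizedStates 𝕜 e
  have hT : T = WeakDual.toStrongDual ⁻¹' Metric.closedBall 0 1 ∩ {g | g e = 1} := by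
    ext g
    simp [T, normalizedStates_eq he, and_comm]
  have hT_compact : IsCompact T := by
    rw [hT]
    exact (WeakDual.isCompact_closedBall 0 1).of_isClosed_subset
      ((WeakDual.isClosed_closedBall 0 1).inter
        (isClosed_eq (WeakDual.eval_continuous e) continuous_const))
      Set.inter_subset_left
  obtain ⟨g, hg_norm, hg_e⟩ := exists_dual_vector 𝕜 e (by simp [he])
  have : LocallyConvexSpace ℝ (WeakDual 𝕜 E) := WeakBilin.locallyConvexSpace
  exact hT_compact.extremePoints_nonempty
    ⟨StrongDual.toWeakDual g, by simpa [he] using hg_e, hg_norm⟩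

end NormalizedStates

section Unitization

variable {A : Type*} [NonUnitalNormedRing A] [NormedSpace ℂ A]
  [IsScalarTower ℂ A A] [SMulCommClass ℂ A A]

@[simp]
theorem WithLp.unitization_ofLp_one : ofLp (1 : WithLp 1 (Unitization ℂ A)) = 1 := rfl

theorem WithLp.unitization_norm_one_s8 : ‖(1 : WithLp 1 (Unitization ℂ A))‖ = 1 := by
  simp [unitization_norm_def]

theorem phiInf_apply (x : WithLp 1 (Unitization ℂ A)) : phiInf A x = (ofLp x).fst := rfl

variable (A) in
noncomputable def sndL1 : WithLp 1 (Unitization ℂ A) →L[ℂ] A :=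
  LinearMap.mkContinuous
    ((Unitization.sndHom ℂ ℂ A) ∘ₗ (WithLp.linearEquiv 1 ℂ (Unitization ℂ A)).toLinearMap)
    1
    (fun x => by
      rw [one_mul, WithLp.unitization_norm_def]
      simp)

theorem sndL1_apply (x : WithLp 1 (Unitization ℂ A)) : sndL1 A x = (ofLp x).snd := rfl

theorem inrL1_snd_add_fst_smul_one (x : WithLp 1 (Unitization ℂ A)) :
    inrL1 (ofLp x).snd + (ofLp x).fst • 1 = x := by
  apply (WithLp.equiv 1 (Unitization ℂ A)).injective
  ext <;> simp [inrL1]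

theorem phiInf_add_comp_sndL1_mem_normalizedStates {ψ : StrongDual ℂ A} (hψ : ‖ψ‖ ≤ 1) :
    phiInf A + ψ.comp (sndL1 A) ∈ normalizedStates ℂ (1 : WithLp 1 (Unitization ℂ A)) := by
  rw [normalizedStates_eq unitization_norm_one_s8]
  refine ⟨by simp [phiInf_apply, sndL1_apply], ?_⟩
  refine ContinuousLinearMap.opNorm_le_bound _ zero_le_one fun x => ?_
  rw [one_mul, unitization_norm_def]
  calc ‖(ofLp x).fst + ψ (ofLp x).snd‖ ≤ ‖(ofLp x).fst‖ + ‖ψ (ofLp x).snd‖ := norm_add_le _ _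
    _ ≤ ‖(ofLp x).fst‖ + ‖ψ‖ * ‖(ofLp x).snd‖ := by gcongr; exact ψ.le_opNorm _
    _ ≤ ‖(ofLp x).fst‖ + ‖(ofLp x).snd‖ := by
        gcongr
        exact mul_le_of_le_one_left (norm_nonneg _) hψ

theorem phiInf_notMem_extremePoints_normalizedStates [Nontrivial A] :
    phiInf A ∉ Set.extremePoints ℝ (normalizedStates ℂ (1 : WithLp 1 (Unitization ℂ A))) := by
  intro hext
  obtain ⟨a, ha⟩ := exists_ne (0 : A)
  obtain ⟨ψ, hψ_norm, hψa⟩ := exists_dual_vector ℂ a (norm_ne_zero_iff.mpr ha)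
  have h_plus := phiInf_add_comp_sndL1_mem_normalizedStates hψ_norm.le
  have h_minus :
      phiInf A - ψ.comp (sndL1 A) ∈ normalizedStates ℂ (1 : WithLp 1 (Unitization ℂ A)) := by
    rw [sub_eq_add_neg, ← ContinuousLinearMap.neg_comp]
    exact phiInf_add_comp_sndL1_mem_normalizedStates (by rw [norm_neg, hψ_norm])
  have h_eq := (mem_extremePoints.mp hext).2 _ h_plus _ h_minus
    (mem_openSegment_add_sub (phiInf A) _)
  have h_ψa : ψ a = 0 := by
    simpa [sndL1_apply, inrL1] using congrArg (fun f => f (inrL1 a)) h_eq.1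
  exact ha (norm_eq_zero.mp (Complex.ofReal_eq_zero.mp (hψa.symm.trans h_ψa)))

theorem eq_phiInf_of_map_mul (hrad : ∀ a : A, quasispectrum ℂ a = {0})
    {f : WithLp 1 (Unitization ℂ A) →L[ℂ] ℂ} (h_one : f 1 = 1)
    (h_mul : ∀ x y, f (x * y) = f x * f y) : f = phiInf A := by
  let φ : WithLp 1 (Unitization ℂ A) →ₐ[ℂ] ℂ := AlgHom.ofLinearMap f.toLinearMap h_one h_mul
  have h_inr (a : A) : f (inrL1 a) = 0 := by
    have h_spec : φ (inrL1 a) ∈ spectrum ℂ (a : Unitization ℂ A) :=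
      AlgEquiv.spectrum_eq (unitizationAlgEquiv ℂ) (inrL1 a) ▸ AlgHom.apply_mem_spectrum φ _
    rwa [← quasispectrum_eq_spectrum_inr' ℂ ℂ a, hrad a] at h_spec
  ext x
  conv_lhs => rw [← inrL1_snd_add_fst_smul_one x]
  simp [h_inr, h_one, phiInf_apply]

end Unitization

theorem exists_extreme_state_not_multiplicative_general
    {A : Type*} [NonUnitalNormedCommRing A] [NormedSpace ℂ A]
    [IsScalarTower ℂ A A] [SMulCommClass ℂ A A] [Nontrivial A]
    (hrad : ∀ a : A, quasispectrum ℂ a = {0}) :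
    ∃ f ∈ Set.extremePoints ℝ
        {f : WithLp 1 (Unitization ℂ A) →L[ℂ] ℂ | f 1 = 1 ∧ ‖f‖ = 1},
      ∃ x y : WithLp 1 (Unitization ℂ A), f (x * y) ≠ f x * f y := by
  obtain ⟨f, hf⟩ := extremePoints_normalizedStates_nonempty (𝕜 := ℂ)
    (unitization_norm_one_s8 (A := A))
  refine ⟨f, hf, ?_⟩
  by_contra! h_mul
  rw [eq_phiInf_of_map_mul hrad hf.1.1 h_mul] at hf
  exact phiInf_notMem_extremePoints_normalizedStates hf

/-- If `A` is a nonzero commutative radical complex Banach algebra and `A_e` its unitization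
with the norm `‖a + λe‖₁ = ‖a‖ + |λ|`, then there exists an extreme point `f` of the set
`D(A_e, e)` of normalized states on `A_e` which is not multiplicative: there are
`x, y ∈ A_e` with `f(xy) ≠ f(x)f(y)`. -/
theorem exists_extreme_state_not_multiplicative
    {A : Type*} [NonUnitalNormedCommRing A] [NormedSpace ℂ A]
    [IsScalarTower ℂ A A] [SMulCommClass ℂ A A] [CompleteSpace A] [Nontrivial A]
    (hrad : ∀ a : A, quasispectrum ℂ a = {0}) :
    ∃ f ∈ Set.extremePoints ℝ
        {f : WithLp 1 (Unitization ℂ A) →L[ℂ] ℂ | f 1 = 1 ∧ ‖f‖ = 1},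
      ∃ x y : WithLp 1 (Unitization ℂ A), f (x * y) ≠ f x * f y :=
  exists_extreme_state_not_multiplicative_general hrad
end
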